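/- arXiv:1605.03051 — 3 statements merged into one kernel-verified Lean document; each statement's English description precedes it below -/
import Mathlib

section
/- Let X and Y be topological spaces and let A be a closed subset of X. Suppose T1 : X → P(Y) and T2 : X → P(Y) are lower semicontinuous set-valued maps such that T2(x) ⊆ T1(x) for all x ∈ A. Then the set-valued map T : X → P(Y) defined by T(x) = T1(x) if x ∉ A and T(x) = T2(x) if x ∈ A is lower semicontinuous. -/
/-! Near a point of `A` the map takes values among `T₁` and `T₂`, and both meet `V` nearby because
`T₂ x ⊆ T₁ x`; near a point outside the closed set `A` the map coincides with `T₁`. -/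

/-- A set-valued map `T : X → Set Y` is lower semicontinuous. -/
def LscMap {X Y : Type*} [TopologicalSpace X] [TopologicalSpace Y] (T : X → Set Y) : Prop :=
  ∀ x : X, ∀ V : Set Y, IsOpen V → (T x ∩ V).Nonempty →
    ∃ U : Set X, IsOpen U ∧ x ∈ U ∧ ∀ y ∈ U, (T y ∩ V).Nonempty

open Filter Topology Set

theorem lscMap_iff_eventually {X Y : Type*} [TopologicalSpace X] [TopologicalSpace Y]
    {T : X → Set Y} :
    LscMap T ↔ ∀ x V, IsOpen V → (T x ∩ V).Nonempty → ∀ᶠ y in 𝓝 x, (T y ∩ V).Nonempty := by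
  simp only [LscMap, eventually_nhds_iff]
  refine forall₄_congr fun _ _ _ _ => exists_congr fun _ => ?_
  tauto

open Classical in
theorem stmt_0 {X Y : Type*} [TopologicalSpace X] [TopologicalSpace Y]
    (A : Set X) (hA : IsClosed A)
    (T₁ T₂ : X → Set Y) (hT₁ : LscMap T₁) (hT₂ : LscMap T₂)
    (hsub : ∀ x ∈ A, T₂ x ⊆ T₁ x) :
    LscMap (fun x => if x ∈ A then T₂ x else T₁ x) := by
  rw [lscMap_iff_eventually] at hT₁ hT₂ ⊢
  intro x V hV hne
  by_cases hx : x ∈ A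
  · rw [if_pos hx] at hne
    have hne₁ : (T₁ x ∩ V).Nonempty := hne.mono (inter_subset_inter_left V (hsub x hx))
    filter_upwards [hT₁ x V hV hne₁, hT₂ x V hV hne] with y h₁ h₂
    split_ifs <;> assumption
  · rw [if_neg hx] at hne
    filter_upwards [hT₁ x V hV hne, hA.isOpen_compl.mem_nhds hx] with y h₁ hy
    rwa [if_neg hy]
end

section
/- Let E and F be topological vector spaces, H ⊆ E and T ⊆ F subsets of the Zima type. Then the product H × T ⊆ E × F is of the Zima type. -/
open Pointwise

/-- A subset `K` of a topological vector space is of the Zima type. -/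
def ZimaType {E : Type*} [AddCommGroup E] [Module ℝ E] [TopologicalSpace E]
    (K : Set E) : Prop :=
  ∀ U ∈ nhds (0 : E), ∃ V ∈ nhds (0 : E), convexHull ℝ (V ∩ (K - K)) ⊆ U

theorem stmt_8_general {E F : Type*}
    [AddCommGroup E] [Module ℝ E] [TopologicalSpace E]
    [AddCommGroup F] [Module ℝ F] [TopologicalSpace F]
    (H : Set E) (T : Set F) (hH : ZimaType H) (hT : ZimaType T) :
    ZimaType (H ×ˢ T) := by
  intro U hU
  obtain ⟨U₁, hU₁, U₂, hU₂, hU⟩ := mem_nhds_prod_iff.mp hU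
  obtain ⟨V₁, hV₁, hV₁U₁⟩ := hH U₁ hU₁
  obtain ⟨V₂, hV₂, hV₂U₂⟩ := hT U₂ hU₂
  refine ⟨V₁ ×ˢ V₂, prod_mem_nhds hV₁ hV₂, ?_⟩
  calc convexHull ℝ (V₁ ×ˢ V₂ ∩ (H ×ˢ T - H ×ˢ T))
      = convexHull ℝ (V₁ ∩ (H - H)) ×ˢ convexHull ℝ (V₂ ∩ (T - T)) := by
        rw [Set.prod_sub_prod_comm, Set.prod_inter_prod, convexHull_prod]
    _ ⊆ U₁ ×ˢ U₂ := Set.prod_mono hV₁U₁ hV₂U₂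
    _ ⊆ U := hU

theorem stmt_8 {E F : Type*}
    [AddCommGroup E] [Module ℝ E] [TopologicalSpace E] [IsTopologicalAddGroup E] [ContinuousSMul ℝ E]
    [AddCommGroup F] [Module ℝ F] [TopologicalSpace F] [IsTopologicalAddGroup F] [ContinuousSMul ℝ F]
    (H : Set E) (T : Set F) (hH : ZimaType H) (hT : ZimaType T) :
    ZimaType (H ×ˢ T) :=
  stmt_8_general H T hH hT
end

section
/- Let X, Y, Z be topological spaces, A ⊆ X × Y, f : X × Y × X → P(Z) a set-valued map, C : X → P(Z) a map assigning to each x a set C(x) ⊆ Z, and define P(x,y) = {u ∈ X : f(x,y,u) ⊆ −int C(x)}. Assume: for each u ∈ X the map (x,y) ↦ f(x,y,u) is upper semicontinuous on A, and the map Q : X → P(Z), Q(x) = Z ∖ (−C(x)), is upper semicontinuous on the projection of A to X, with each C(x) a closed set. Then for each closed set V ⊆ X, the set {(x,y) ∈ A : P(x,y) ⊆ V} is closed in A; equivalently, P restricted to A is lower semicontinuous. -/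
/-!
If `u ∈ P(p)`, i.e. `f(p, u) ⊆ -int C(p₁)`, then upper semicontinuity of `f(·, u)` keeps
`f(q, u) ⊆ -int C(p₁)` for `q ∈ A` near `p`. Since `C(p₁)` is closed, `(-C(p₁))ᶜ` is an open
neighbourhood of `Q(p₁)`, so upper semicontinuity of `Q` gives `-C(p₁) ⊆ -C(q₁)`, hence
`-int C(p₁) ⊆ -int C(q₁)`, for `q` near `p`. So `u ∈ P(q)` near `p`, which makes `P` lower
semicontinuous on `A`.
-/

open Filter Topology Set

theorem neg_interior {G : Type*} [TopologicalSpace G] [InvolutiveNeg G] [ContinuousNeg G]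
    (s : Set G) : -interior s = interior (-s) :=
  (Homeomorph.neg G).preimage_interior s

theorem UpperHemicontinuousWithinAt.eventually_neg_interior_subset {X Z : Type*}
    [TopologicalSpace X] [TopologicalSpace Z] [InvolutiveNeg Z] [ContinuousNeg Z]
    {C : X → Set Z} {s : Set X} {a : X}
    (hQ : UpperHemicontinuousWithinAt (fun x ↦ (-C x)ᶜ) s a) (hCa : IsClosed (C a)) :
    ∀ᶠ x in 𝓝[s] a, -interior (C a) ⊆ -interior (C x) := by
  filter_upwards [hQ.forall_isOpen _ hCa.neg.isOpen_compl subset_rfl] with x hx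
  rw [neg_interior, neg_interior]
  exact interior_mono (compl_subset_compl.mp hx)

theorem eventually_subset_neg_interior {X Y Z : Type*} [TopologicalSpace X] [TopologicalSpace Y]
    [TopologicalSpace Z] [InvolutiveNeg Z] [ContinuousNeg Z]
    {A : Set (X × Y)} {F : X × Y → Set Z} {C : X → Set Z} {p : X × Y}
    (hF : UpperHemicontinuousWithinAt F A p)
    (hQ : UpperHemicontinuousWithinAt (fun x ↦ (-C x)ᶜ) (Prod.fst '' A) p.1)
    (hCp : IsClosed (C p.1)) (hFp : F p ⊆ -interior (C p.1)) :
    ∀ᶠ q in 𝓝[A] p, F q ⊆ -interior (C q.1) := by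
  have hfst : Tendsto Prod.fst (𝓝[A] p) (𝓝[Prod.fst '' A] p.1) :=
    continuous_fst.continuousWithinAt.tendsto_nhdsWithin_image
  filter_upwards [hF.forall_isOpen _ (neg_interior (C p.1) ▸ isOpen_interior) hFp,
    hfst.eventually (hQ.eventually_neg_interior_subset hCp)] with q hFq hCq
  exact hFq.trans hCq

theorem lowerHemicontinuousOn_setOf_subset_neg_interior {X Y Z : Type*} [TopologicalSpace X]
    [TopologicalSpace Y] [TopologicalSpace Z] [InvolutiveNeg Z] [ContinuousNeg Z]
    {A : Set (X × Y)} {f : X × Y → X → Set Z} {C : X → Set Z}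
    (hf : ∀ u, UpperHemicontinuousOn (f · u) A)
    (hQ : UpperHemicontinuousOn (fun x ↦ (-C x)ᶜ) (Prod.fst '' A)) (hC : ∀ x, IsClosed (C x)) :
    LowerHemicontinuousOn (fun p ↦ {u | f p u ⊆ -interior (C p.1)}) A := by
  refine lowerHemicontinuousOn_iff.mpr fun p hp ↦ lowerHemicontinuousWithinAt_iff.mpr ?_
  rintro t - ⟨u, hu, hut⟩
  filter_upwards [eventually_subset_neg_interior (hf u p hp) (hQ p.1 ⟨p, hp, rfl⟩) (hC p.1) hu]
    with q hq using ⟨u, hq, hut⟩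

theorem LowerHemicontinuousOn.exists_isClosed_inter_eq {α β : Type*} [TopologicalSpace α]
    [TopologicalSpace β] {f : α → Set β} {s : Set α} (hf : LowerHemicontinuousOn f s)
    {V : Set β} (hV : IsClosed V) :
    ∃ W : Set α, IsClosed W ∧ {x ∈ s | f x ⊆ V} = W ∩ s := by
  refine ⟨closure {x ∈ s | f x ⊆ V}, isClosed_closure,
    Subset.antisymm (fun x hx ↦ ⟨subset_closure hx, hx.1⟩) ?_⟩
  rintro x ⟨hx_closure, hxs⟩
  refine ⟨hxs, ?_⟩
  by_contra hxV
  obtain ⟨u, hu, huV⟩ := not_subset.mp hxV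
  have hmeets : ∀ᶠ x' in 𝓝[s] x, (f x' ∩ Vᶜ).Nonempty :=
    lowerHemicontinuousWithinAt_iff.mp (hf x hxs) _ hV.isOpen_compl ⟨u, hu, huV⟩
  have hfreq : ∃ᶠ x' in 𝓝[s] x, f x' ⊆ V :=
    frequently_nhdsWithin_iff.mpr
      ((mem_closure_iff_frequently.mp hx_closure).mono fun _ h ↦ ⟨h.2, h.1⟩)
  obtain ⟨x', hx'V, v, hv, hvV⟩ := (hfreq.and_eventually hmeets).exists
  exact hvV (hx'V hv)

theorem stmt_17 {X Y Z : Type*} [TopologicalSpace X] [TopologicalSpace Y]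
    [TopologicalSpace Z] [AddCommGroup Z] [IsTopologicalAddGroup Z]
    (A : Set (X × Y)) (f : X → Y → X → Set Z) (C : X → Set Z)
    (P : X × Y → Set X)
    (hP : ∀ p : X × Y, P p = {u : X | f p.1 p.2 u ⊆ -interior (C p.1)})
    (hCclosed : ∀ x : X, IsClosed (C x))
    -- for each u, (x,y) ↦ f x y u is upper semicontinuous on A
    (husc : ∀ u : X, ∀ p ∈ A, ∀ V : Set Z, IsOpen V → f p.1 p.2 u ⊆ V →
      ∃ U ∈ nhds p, ∀ q ∈ U ∩ A, f q.1 q.2 u ⊆ V)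
    -- Q(x) = Z \ (−C(x)) is upper semicontinuous on pr_X A
    (hQusc : ∀ x ∈ Prod.fst '' A, ∀ V : Set Z, IsOpen V → (-(C x))ᶜ ⊆ V →
      ∃ U ∈ nhds x, ∀ x' ∈ U ∩ Prod.fst '' A, (-(C x'))ᶜ ⊆ V) :
    ∀ V : Set X, IsClosed V →
      ∃ W : Set (X × Y), IsClosed W ∧ {p ∈ A | P p ⊆ V} = W ∩ A := by
  have hf : ∀ u, UpperHemicontinuousOn (fun p : X × Y ↦ f p.1 p.2 u) A := fun u ↦
    .of_forall_isOpen fun p hp V hV hpV ↦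
      mem_nhdsWithin_iff_exists_mem_nhds_inter.mpr (husc u p hp V hV hpV)
  have hQ : UpperHemicontinuousOn (fun x ↦ (-C x)ᶜ) (Prod.fst '' A) :=
    .of_forall_isOpen fun x hx V hV hxV ↦
      mem_nhdsWithin_iff_exists_mem_nhds_inter.mpr (hQusc x hx V hV hxV)
  have hP_lsc : LowerHemicontinuousOn P A := by
    rw [funext hP]
    exact lowerHemicontinuousOn_setOf_subset_neg_interior (f := fun p u ↦ f p.1 p.2 u) hf hQ
      hCclosed
  exact fun V hV ↦ hP_lsc.exists_isClosed_inter_eq hV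
end
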